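/- arXiv:2311.15628 — 4 statements merged into one kernel-verified Lean document; each statement's English description precedes it below -/
import Mathlib

section
/- For A ∈ ℝ^{N×N} (viewed as a complex matrix), there exists a positive definite matrix D ∈ ℂ^{N×N} such that DA is anti-hermitian if and only if A is diagonalizable over ℂ and every eigenvalue of A is purely imaginary. -/
open Matrix
open scoped ComplexOrder

/-!
Write the positive definite `D` as `Qᴴ Q` with `Q` invertible. Then `DB` is skew-Hermitian
exactly when `Q B Q⁻¹` is, and a skew-Hermitian matrix is `-i` times a Hermitian one, hence
unitarily diagonalizable with purely imaginary eigenvalues. Conversely, if `P⁻¹ B P = diag d`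
with `d` purely imaginary, then `D = (P⁻¹)ᴴ P⁻¹` works, since `D B = (P⁻¹)ᴴ (diag d) P⁻¹`.
-/

namespace Matrix

variable {n : Type*} [DecidableEq n]

theorem diagonal_mem_skewAdjoint_iff {d : n → ℂ} :
    diagonal d ∈ skewAdjoint (Matrix n n ℂ) ↔ ∀ i, (d i).re = 0 := by
  rw [skewAdjoint.mem_iff, star_eq_conjTranspose, diagonal_conjTranspose, diagonal_neg,
    diagonal_eq_diagonal_iff]
  refine forall_congr' fun i => ?_
  simp [Complex.ext_iff, self_eq_neg]

variable [Fintype n]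

theorem spectrum_eq_range_of_inv_mul_mul_eq_diagonal {K : Type*} [Field K] {B P : Matrix n n K}
    {d : n → K} (hP : IsUnit P.det) (h : P⁻¹ * B * P = diagonal d) :
    spectrum K B = Set.range d := by
  lift P to (Matrix n n K)ˣ using (isUnit_iff_isUnit_det _).2 hP
  rw [← spectrum_diagonal, ← h, ← coe_units_inv, spectrum.units_conjugate']

theorem exists_unitary_star_mul_mul_eq_diagonal {M : Matrix n n ℂ}
    (hM : M ∈ skewAdjoint (Matrix n n ℂ)) :
    ∃ U ∈ unitaryGroup n ℂ, ∃ d, star U * M * U = diagonal d := by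
  have hH : (Complex.I • M).IsHermitian :=
    isSelfAdjoint_smul_of_mem_skewAdjoint (skewAdjoint.mem_iff.2 Complex.conj_I) hM
  refine ⟨hH.eigenvectorUnitary, hH.eigenvectorUnitary.2,
    -Complex.I • (RCLike.ofReal ∘ hH.eigenvalues), ?_⟩
  have hdiag := hH.conjStarAlgAut_star_eigenvectorUnitary
  rw [Unitary.conjStarAlgAut_star_apply] at hdiag
  rw [diagonal_smul, ← hdiag]
  simp [smul_smul]

theorem exists_diagonalization_of_posDef_mul_mem_skewAdjoint {D B : Matrix n n ℂ}
    (hD : D.PosDef) (hDB : D * B ∈ skewAdjoint (Matrix n n ℂ)) :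
    ∃ P : Matrix n n ℂ, IsUnit P.det ∧ ∃ d, P⁻¹ * B * P = diagonal d ∧ ∀ i, (d i).re = 0 := by
  open scoped MatrixOrder in
  obtain ⟨Q, hQ, rfl⟩ :=
    CStarAlgebra.isStrictlyPositive_iff_eq_star_mul_self.mp hD.isStrictlyPositive
  have hQdet : IsUnit Q.det := (isUnit_iff_isUnit_det Q).1 hQ
  have hM : Q * B * Q⁻¹ ∈ skewAdjoint (Matrix n n ℂ) := by
    have hconj := skewAdjoint.conjugate' hDB Q⁻¹
    rwa [← mul_assoc, ← mul_assoc, ← star_mul, mul_nonsing_inv Q hQdet, star_one, one_mul]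
      at hconj
  obtain ⟨U, hU, d, hd⟩ := exists_unitary_star_mul_mul_eq_diagonal hM
  have hUinv : U⁻¹ = star U := inv_eq_left_inv (mem_unitaryGroup_iff'.mp hU)
  refine ⟨Q⁻¹ * U, ?_, d, ?_, diagonal_mem_skewAdjoint_iff.1 (hd ▸ skewAdjoint.conjugate' hM U)⟩
  · rw [det_mul]
    exact (isUnit_nonsing_inv_det Q hQdet).mul (UnitaryGroup.det_isUnit ⟨U, hU⟩)
  · rw [mul_inv_rev, hUinv, nonsing_inv_nonsing_inv Q hQdet, ← hd]
    simp only [mul_assoc]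

theorem posDef_conjTranspose_inv_mul_inv {P : Matrix n n ℂ} (hP : IsUnit P.det) :
    ((P⁻¹)ᴴ * P⁻¹).PosDef :=
  PosDef.conjTranspose_mul_self _ (mulVec_injective_of_isUnit
    ((isUnit_iff_isUnit_det _).2 (isUnit_nonsing_inv_det P hP)))

theorem conjTranspose_inv_mul_inv_mul_mem_skewAdjoint {B P : Matrix n n ℂ} {d : n → ℂ}
    (hP : IsUnit P.det) (h : P⁻¹ * B * P = diagonal d) (hd : ∀ i, (d i).re = 0) :
    (P⁻¹)ᴴ * P⁻¹ * B ∈ skewAdjoint (Matrix n n ℂ) := by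
  have hB : P⁻¹ * B = diagonal d * P⁻¹ := by
    rw [← h, mul_assoc _ P, mul_nonsing_inv P hP, mul_one]
  rw [mul_assoc, hB, ← mul_assoc, ← star_eq_conjTranspose]
  exact skewAdjoint.conjugate' (diagonal_mem_skewAdjoint_iff.2 hd) _

theorem exists_posDef_mul_mem_skewAdjoint_iff (B : Matrix n n ℂ) :
    (∃ D : Matrix n n ℂ, D.PosDef ∧ D * B ∈ skewAdjoint (Matrix n n ℂ)) ↔
      (∃ P : Matrix n n ℂ, IsUnit P.det ∧ ∃ d, P⁻¹ * B * P = diagonal d) ∧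
        ∀ z ∈ spectrum ℂ B, z.re = 0 := by
  constructor
  · rintro ⟨D, hD, hDB⟩
    obtain ⟨P, hP, d, hPd, hd⟩ := exists_diagonalization_of_posDef_mul_mem_skewAdjoint hD hDB
    refine ⟨⟨P, hP, d, hPd⟩, ?_⟩
    rw [spectrum_eq_range_of_inv_mul_mul_eq_diagonal hP hPd]
    rintro _ ⟨i, rfl⟩
    exact hd i
  · rintro ⟨⟨P, hP, d, hPd⟩, hspec⟩
    have hd : ∀ i, (d i).re = 0 := fun i =>
      hspec _ (spectrum_eq_range_of_inv_mul_mul_eq_diagonal hP hPd ▸ Set.mem_range_self i)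
    exact ⟨_, posDef_conjTranspose_inv_mul_inv hP,
      conjTranspose_inv_mul_inv_mul_mem_skewAdjoint hP hPd hd⟩

end Matrix

theorem stmt_7 (N : ℕ) (A : Matrix (Fin N) (Fin N) ℝ) :
    (∃ D : Matrix (Fin N) (Fin N) ℂ, D.PosDef ∧
        (D * A.map Complex.ofReal)ᴴ = -(D * A.map Complex.ofReal))
      ↔ ((∃ P : Matrix (Fin N) (Fin N) ℂ, IsUnit P.det ∧
            ∃ d : Fin N → ℂ, P⁻¹ * A.map Complex.ofReal * P = Matrix.diagonal d) ∧
          ∀ z ∈ spectrum ℂ (A.map Complex.ofReal), z.re = 0) :=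
  exists_posDef_mul_mem_skewAdjoint_iff _
end

section
/- Let A ∈ ℝ^{N×N}. There exists a pair (B, C) ∈ ℂ^{M×N} × ℂ^{N×M} with rank B = N and CB = I_N such that BAC is anti-hermitian if and only if A is diagonalizable over ℂ with all eigenvalues purely imaginary. -/
/-!
If `S = B A C` is skew-Hermitian and `C B = 1`, then `S B = B A`, so every polynomial that
annihilates `S` annihilates `A = C S B`. Being unitarily diagonalizable with purely imaginary
eigenvalues, `S` is annihilated by a squarefree polynomial with purely imaginary roots; hence so
is `A`, which is therefore diagonalizable, with every eigenvalue a root of that polynomial.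
Conversely, if `P⁻¹ A P = D` is diagonal with purely imaginary entries, then `B = P⁻¹`, `C = P`
works, because `B A C = D` and `Dᴴ = -D`.
-/

open Matrix Polynomial

theorem Matrix.aeval_mul_eq_mul_aeval {R m n : Type*} [CommRing R] [Fintype m] [DecidableEq m]
    [Fintype n] [DecidableEq n] {S : Matrix m m R} {T : Matrix n n R} {B : Matrix m n R}
    (h : S * B = B * T) (p : R[X]) : aeval S p * B = B * aeval T p := by
  induction p using Polynomial.induction_on' with
  | add p q hp hq => simp only [map_add, Matrix.add_mul, Matrix.mul_add, hp, hq]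
  | monomial k a =>
    have hpow : S ^ k * B = B * T ^ k := by
      induction k with
      | zero => simp
      | succ k ih =>
        rw [pow_succ, pow_succ, Matrix.mul_assoc, h, ← Matrix.mul_assoc, ih, Matrix.mul_assoc]
    simp only [aeval_monomial, ← Algebra.smul_def, Matrix.smul_mul, Matrix.mul_smul, hpow]

theorem Matrix.aeval_eq_zero_of_mul_eq_mul_of_mul_eq_one {R m n : Type*} [CommRing R]
    [Fintype m] [DecidableEq m] [Fintype n] [DecidableEq n] {S : Matrix m m R}
    {T : Matrix n n R} {B : Matrix m n R} {C : Matrix n m R} (hSB : S * B = B * T)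
    (hCB : C * B = 1) {p : R[X]} (hp : aeval S p = 0) : aeval T p = 0 :=
  calc aeval T p = C * (B * aeval T p) := by rw [← Matrix.mul_assoc, hCB, Matrix.one_mul]
    _ = 0 := by rw [← aeval_mul_eq_mul_aeval hSB, hp, Matrix.zero_mul, Matrix.mul_zero]

theorem Matrix.aeval_diagonal {R n : Type*} [CommRing R] [Fintype n] [DecidableEq n]
    (d : n → R) (p : R[X]) : aeval (diagonal d) p = diagonal fun i => p.eval (d i) := by
  rw [← diagonalAlgHom_apply (R := R), aeval_algHom_apply, aeval_pi_apply, diagonalAlgHom_apply]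
  simp only [coe_aeval_eq_eval]

theorem spectrum.isRoot_of_aeval_eq_zero {K A : Type*} [Field K] [Ring A] [Algebra K A]
    {a : A} {p : K[X]} (hp : aeval a p = 0) {z : K} (hz : z ∈ spectrum K a) : p.IsRoot z := by
  obtain h | h := subsingleton_or_nontrivial A
  · simp [spectrum.of_subsingleton] at hz
  · simpa [hp, spectrum.zero_eq] using spectrum.subset_polynomial_aeval a p ⟨z, hz, rfl⟩

theorem Module.End.exists_basis_apply_eq_smul_of_iSup_eigenspace_eq_top {K V ι : Type*}
    [Field K] [AddCommGroup V] [Module K V] [FiniteDimensional K V] (f : Module.End K V)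
    (c : Module.Basis ι K V) (h : ⨆ μ, f.eigenspace μ = ⊤) :
    ∃ (b : Module.Basis ι K V) (d : ι → K), ∀ i, f (b i) = d i • b i := by
  classical
  have hint : DirectSum.IsInternal fun μ => f.eigenspace μ :=
    DirectSum.isInternal_submodule_of_iSupIndep_of_iSup_eq_top f.eigenspaces_iSupIndep h
  let v μ := Module.finBasis K (f.eigenspace μ)
  let e := (hint.collectedBasis v).indexEquiv c
  refine ⟨(hint.collectedBasis v).reindex e, fun i => (e.symm i).1, fun i => ?_⟩
  rw [Module.Basis.reindex_apply]
  exact mem_eigenspace_iff.mp (hint.collectedBasis_mem v _)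

theorem Matrix.exists_inv_mul_mul_eq_diagonal_of_basis {K n : Type*} [Field K] [Fintype n]
    [DecidableEq n] (T : Matrix n n K) (b : Module.Basis n K (n → K)) (d : n → K)
    (hb : ∀ i, T *ᵥ b i = d i • b i) :
    ∃ P : Matrix n n K, IsUnit P.det ∧ P⁻¹ * T * P = diagonal d := by
  let std := Pi.basisFun K n
  have hleft : b.toMatrix std * std.toMatrix b = 1 := b.toMatrix_mul_toMatrix_flip std
  refine ⟨std.toMatrix b, isUnit_det_of_left_inverse hleft, ?_⟩
  rw [inv_eq_left_inv hleft, ← LinearMap.toMatrix'_toLin' T, ← LinearMap.toMatrix_eq_toMatrix',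
    basis_toMatrix_mul_linearMap_toMatrix_mul_basis_toMatrix]
  ext i j
  by_cases h : i = j <;> simp [LinearMap.toMatrix_apply, hb, h]

theorem Matrix.exists_inv_mul_mul_eq_diagonal_of_squarefree_aeval_eq_zero {K n : Type*}
    [Field K] [IsAlgClosed K] [Fintype n] [DecidableEq n] {T : Matrix n n K} {p : K[X]}
    (hsq : Squarefree p) (hp : aeval T p = 0) :
    ∃ P : Matrix n n K, IsUnit P.det ∧ ∃ d : n → K, P⁻¹ * T * P = diagonal d := by
  have hss : Module.End.IsSemisimple (toLin' T) := by
    refine Module.End.isSemisimple_of_squarefree_aeval_eq_zero hsq ?_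
    have := aeval_algHom_apply (toLinAlgEquiv' (R := K) (n := n)) T p
    rwa [hp, map_zero] at this
  obtain ⟨b, d, hb⟩ := Module.End.exists_basis_apply_eq_smul_of_iSup_eigenspace_eq_top
    (toLin' T) (Pi.basisFun K n) hss.iSup_eigenspace_eq_top
  obtain ⟨P, hP, hPT⟩ := T.exists_inv_mul_mul_eq_diagonal_of_basis b d hb
  exact ⟨P, hP, d, hPT⟩

theorem Matrix.exists_squarefree_aeval_eq_zero_of_conjTranspose_eq_neg {n : Type*} [Fintype n]
    [DecidableEq n] {S : Matrix n n ℂ} (hS : Sᴴ = -S) :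
    ∃ p : ℂ[X], Squarefree p ∧ (∀ z, p.IsRoot z → z.re = 0) ∧ aeval S p = 0 := by
  have hH : (Complex.I • S).IsHermitian := by
    rw [IsHermitian, conjTranspose_smul, hS, Complex.star_def, Complex.conj_I, neg_smul,
      smul_neg, neg_neg]
  let d i : ℂ := -Complex.I * hH.eigenvalues i
  have hSd : S = Unitary.conjStarAlgAut ℂ _ hH.eigenvectorUnitary (diagonal d) := by
    have hdiag : diagonal d = -Complex.I • diagonal (RCLike.ofReal ∘ hH.eigenvalues) := by
      rw [← diagonal_smul]
      rfl
    rw [hdiag, map_smul, ← hH.spectral_theorem, smul_smul]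
    simp
  refine ⟨∏ μ ∈ Finset.univ.image d, (X - C μ), ?_, ?_, ?_⟩
  · exact (separable_prod_X_sub_C_iff'.mpr (Set.injOn_id _)).squarefree
  · intro z hz
    obtain ⟨μ, hμ, hz⟩ := (isRoot_prod _ _ _).mp hz
    obtain ⟨i, -, rfl⟩ := Finset.mem_image.mp hμ
    rw [← root_X_sub_C.mp hz]
    simp [d]
  · have hroot i : (∏ μ ∈ Finset.univ.image d, (X - C μ)).eval (d i) = 0 := by
      rw [eval_prod]
      exact Finset.prod_eq_zero (Finset.mem_image_of_mem d (Finset.mem_univ i)) (by simp)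
    rw [hSd, aeval_algHom_apply, aeval_diagonal]
    simp only [hroot, diagonal_zero, map_zero]

theorem Matrix.spectrum_inv_mul_mul {R n : Type*} [CommRing R] [Fintype n] [DecidableEq n]
    {P : Matrix n n R} (hP : IsUnit P.det) (A : Matrix n n R) :
    spectrum R (P⁻¹ * A * P) = spectrum R A := by
  lift P to (Matrix n n R)ˣ using (isUnit_iff_isUnit_det P).mpr hP
  rw [← coe_units_inv, spectrum.units_conjugate']

theorem Matrix.diagonal_conjTranspose_eq_neg {n : Type*} [DecidableEq n] {d : n → ℂ}
    (hd : ∀ i, (d i).re = 0) : (diagonal d)ᴴ = -diagonal d := by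
  have hstar : star d = -d := funext fun i => Complex.ext (by simp [hd i]) (by simp)
  rw [diagonal_conjTranspose, hstar, diagonal_neg]
  rfl

theorem stmt_10 (N : ℕ) (A : Matrix (Fin N) (Fin N) ℝ) :
    (∃ M : ℕ, N ≤ M ∧
        ∃ B : Matrix (Fin M) (Fin N) ℂ, ∃ C : Matrix (Fin N) (Fin M) ℂ,
          B.rank = N ∧ C * B = 1 ∧
          (B * A.map Complex.ofReal * C)ᴴ = -(B * A.map Complex.ofReal * C))
      ↔ ((∃ P : Matrix (Fin N) (Fin N) ℂ, IsUnit P.det ∧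
            ∃ d : Fin N → ℂ, P⁻¹ * A.map Complex.ofReal * P = Matrix.diagonal d) ∧
          ∀ z ∈ spectrum ℂ (A.map Complex.ofReal), z.re = 0) := by
  set A' := A.map Complex.ofReal
  constructor
  · rintro ⟨M, -, B, C, -, hCB, hskew⟩
    obtain ⟨p, hsq, himag, hp⟩ := exists_squarefree_aeval_eq_zero_of_conjTranspose_eq_neg hskew
    have hSB : B * A' * C * B = B * A' := by rw [Matrix.mul_assoc _ C B, hCB, Matrix.mul_one]
    have hA : aeval A' p = 0 := aeval_eq_zero_of_mul_eq_mul_of_mul_eq_one hSB hCB hp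
    exact ⟨exists_inv_mul_mul_eq_diagonal_of_squarefree_aeval_eq_zero hsq hA,
      fun z hz => himag z (spectrum.isRoot_of_aeval_eq_zero hA hz)⟩
  · rintro ⟨⟨P, hP, d, hPd⟩, himag⟩
    refine ⟨N, le_rfl, P⁻¹, P, ?_, mul_nonsing_inv P hP, ?_⟩
    · rw [rank_of_isUnit _ ((isUnit_iff_isUnit_det _).mpr (isUnit_nonsing_inv_det P hP)),
        Fintype.card_fin]
    · rw [hPd]
      refine diagonal_conjTranspose_eq_neg fun i => himag _ ?_
      rw [← spectrum_inv_mul_mul hP, hPd, spectrum_diagonal]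
      exact ⟨i, rfl⟩
end

section
/- Let A ∈ ℝ^{N×N} and B ∈ ℝ^{M×N} with rank B = N. Then BAC_B is real anti-symmetric if and only if BᵀBA is real anti-symmetric, where C_B = (BᵀB)⁻¹Bᵀ. -/
open Matrix

theorem stmt_11 (M N : ℕ) (A : Matrix (Fin N) (Fin N) ℝ)
    (B : Matrix (Fin M) (Fin N) ℝ) (hrank : B.rank = N) :
    ((B * A * ((Bᵀ * B)⁻¹ * Bᵀ))ᵀ = -(B * A * ((Bᵀ * B)⁻¹ * Bᵀ)))
      ↔ ((Bᵀ * B * A)ᵀ = -(Bᵀ * B * A)) := by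
  set G := Bᵀ * B with hGdef
  have hGrank : G.rank = N := by rw [hGdef, Matrix.rank_transpose_mul_self, hrank]
  have hker : LinearMap.ker G.mulVecLin = ⊥ := by
    have h1 := LinearMap.finrank_range_add_finrank_ker G.mulVecLin
    rw [Module.finrank_fintype_fun_eq_card, Fintype.card_fin] at h1
    have hr : G.rank = Module.finrank ℝ (LinearMap.range G.mulVecLin) := rfl
    exact Submodule.finrank_eq_zero.mp (by omega)
  have hdet : IsUnit G.det := by
    rw [isUnit_iff_ne_zero]
    intro h0
    obtain ⟨v, hv, hv0⟩ := Matrix.exists_mulVec_eq_zero_iff.mpr h0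
    exact hv (LinearMap.ker_eq_bot.mp hker (show G.mulVecLin v = G.mulVecLin 0 by
      simpa using hv0))
  have hGsym : Gᵀ = G := by rw [hGdef, transpose_mul, transpose_transpose]
  have hinvsym : G⁻¹ᵀ = G⁻¹ := by rw [Matrix.transpose_nonsing_inv, hGsym]
  have hGi : G * G⁻¹ = 1 := Matrix.mul_nonsing_inv G hdet
  have hiG : G⁻¹ * G = 1 := Matrix.nonsing_inv_mul G hdet
  have hT : (B * A * (G⁻¹ * Bᵀ))ᵀ = B * (G⁻¹ * Aᵀ) * Bᵀ := by
    rw [transpose_mul, transpose_mul, transpose_mul, hinvsym, transpose_transpose]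
    simp only [Matrix.mul_assoc]
  constructor
  · intro h
    rw [hT] at h
    have key : G * (G⁻¹ * Aᵀ) * G = -(G * A * (G⁻¹ * G)) := by
      calc G * (G⁻¹ * Aᵀ) * G
          = Bᵀ * (B * (G⁻¹ * Aᵀ) * Bᵀ) * B := by
            rw [hGdef]; simp only [Matrix.mul_assoc]
        _ = Bᵀ * -(B * A * (G⁻¹ * Bᵀ)) * B := by rw [h]
        _ = -(G * A * (G⁻¹ * G)) := by
            rw [hGdef]
            simp only [Matrix.mul_neg, Matrix.neg_mul, Matrix.mul_assoc]
    rw [hiG, Matrix.mul_one] at key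
    rw [show G * (G⁻¹ * Aᵀ) = Aᵀ by rw [← Matrix.mul_assoc, hGi, Matrix.one_mul]] at key
    rw [transpose_mul, hGsym, key]
  · intro h
    rw [transpose_mul, hGsym] at h
    have h3 : G⁻¹ * Aᵀ = -(A * G⁻¹) := by
      calc G⁻¹ * Aᵀ = G⁻¹ * Aᵀ * (G * G⁻¹) := by rw [hGi, Matrix.mul_one]
        _ = G⁻¹ * (Aᵀ * G) * G⁻¹ := by simp only [Matrix.mul_assoc]
        _ = G⁻¹ * -(G * A) * G⁻¹ := by rw [h]
        _ = -(G⁻¹ * G * (A * G⁻¹)) := by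
            simp only [Matrix.mul_neg, Matrix.neg_mul, Matrix.mul_assoc]
        _ = -(A * G⁻¹) := by rw [hiG, Matrix.one_mul]
    rw [hT, h3]
    simp only [Matrix.mul_neg, Matrix.neg_mul, Matrix.mul_assoc]
end

section
/- Let A ∈ ℝ^{N×N} and B ∈ ℂ^{M×N} with rank B = N such that BAC_B is anti-hermitian. Suppose additionally that B†B is a real matrix, that BAC_B has at most s nonzero entries per row and per column (s-sparse), and that BAC_B* has at most s' nonzero entries per row and per column, where C_B* denotes the entrywise complex conjugate of C_B. Then defining B' = [Re B; Im B] ∈ ℝ^{2M×N}, the matrix B'AC_{B'} is 2(s+s')-sparse. -/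
open Matrix

/-- A matrix is `k`-sparse if each row and each column has at most `k` nonzero entries. -/
def IsSparse {m n α : Type*} [Fintype m] [Fintype n] [Zero α]
    (k : ℕ) (X : Matrix m n α) : Prop :=
  (∀ i, {j | X i j ≠ 0}.ncard ≤ k) ∧ (∀ j, {i | X i j ≠ 0}.ncard ≤ k)

/-!
Write `B = R + iJ` with `R = Re B`, `J = Im B`, so that `B' = [R; J]`. Since `B†B` is real it equals
`G := RᵀR + JᵀJ = B'ᵀB'`, hence with the real matrix `P := AG⁻¹` we get `BAC_B = BPB†`,
`BAC_B* = BPBᵀ` and `B'AC_{B'} = B'PB'ᵀ`, the block matrix of `XPYᵀ` for `X, Y ∈ {R, J}`.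
From `Bᵀ + B† = 2Rᵀ` and `Bᵀ - B† = 2iJᵀ`, the entry `(i, j)` of each block is the real or
imaginary part of an entry of `BP(Bᵀ ± B†)`, so it vanishes as soon as the `(i, j)` entries of
both `BAC_B` and `BAC_B*` vanish. Each row and column of `B'AC_{B'}` thus meets at most
`2(s + s')` nonzero entries.
-/

theorem Set.ncard_preimage_sumElim_id_le {ι : Type*} (T : Set ι) :
    (Sum.elim id id ⁻¹' T).ncard ≤ 2 * T.ncard := by
  have hpre : Sum.elim id id ⁻¹' T = Sum.inl '' T ∪ Sum.inr '' T := by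
    ext (x | x) <;> simp
  calc (Sum.elim id id ⁻¹' T).ncard ≤ (Sum.inl '' T).ncard + (Sum.inr '' T).ncard :=
        hpre ▸ Set.ncard_union_le _ _
    _ = 2 * T.ncard := by
        rw [Set.ncard_image_of_injective _ Sum.inl_injective,
          Set.ncard_image_of_injective _ Sum.inr_injective, two_mul]

theorem Set.ncard_le_of_subset_preimage_sumElim_id {ι : Type*} [Finite ι] {U : Set (ι ⊕ ι)}
    {S S' : Set ι} (hU : U ⊆ Sum.elim id id ⁻¹' (S ∪ S')) :
    U.ncard ≤ 2 * (S.ncard + S'.ncard) :=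
  calc U.ncard ≤ (Sum.elim id id ⁻¹' (S ∪ S')).ncard := Set.ncard_le_ncard hU (Set.toFinite _)
    _ ≤ 2 * (S ∪ S').ncard := Set.ncard_preimage_sumElim_id_le _
    _ ≤ 2 * (S.ncard + S'.ncard) := by gcongr; exact Set.ncard_union_le _ _

theorem IsSparse.of_ne_zero_imp {m n α β γ : Type*} [Fintype m] [Fintype n]
    [Zero α] [Zero β] [Zero γ] {k k' : ℕ} {X : Matrix (m ⊕ m) (n ⊕ n) α}
    {Y : Matrix m n β} {Y' : Matrix m n γ} (hY : IsSparse k Y) (hY' : IsSparse k' Y')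
    (h : ∀ a b, X a b ≠ 0 →
      Y (Sum.elim id id a) (Sum.elim id id b) ≠ 0 ∨ Y' (Sum.elim id id a) (Sum.elim id id b) ≠ 0) :
    IsSparse (2 * (k + k')) X := by
  constructor
  · intro a
    refine (Set.ncard_le_of_subset_preimage_sumElim_id (S := {j | Y (Sum.elim id id a) j ≠ 0})
      (S' := {j | Y' (Sum.elim id id a) j ≠ 0}) fun b hb => h a b hb).trans ?_
    gcongr
    exacts [hY.1 _, hY'.1 _]
  · intro b
    refine (Set.ncard_le_of_subset_preimage_sumElim_id (S := {i | Y i (Sum.elim id id b) ≠ 0})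
      (S' := {i | Y' i (Sum.elim id id b) ≠ 0}) fun a ha => h a b ha).trans ?_
    gcongr
    exacts [hY.2 _, hY'.2 _]

namespace Matrix

variable {m n p : Type*}

theorem map_nonsing_inv {K L : Type*} [Field K] [Field L] [Fintype n] [DecidableEq n]
    (f : K →+* L) (A : Matrix n n K) : A⁻¹.map f = (A.map f)⁻¹ := by
  have hadj : A.adjugate.map f = (A.map f).adjugate := f.map_adjugate A
  have hdet : f A.det = (A.map f).det := f.map_det A
  rw [inv_def, inv_def, ← hadj, ← hdet, Ring.inverse_eq_inv', Ring.inverse_eq_inv', ← map_inv₀]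
  ext i j
  simp

theorem fromRows_mul_mul_transpose_fromRows {R : Type*} [CommSemiring R] [Fintype n]
    (X Y : Matrix m n R) (P : Matrix n n R) :
    fromRows X Y * P * (fromRows X Y)ᵀ =
      fromBlocks (X * P * Xᵀ) (X * P * Yᵀ) (Y * P * Xᵀ) (Y * P * Yᵀ) := by
  rw [transpose_fromRows, fromRows_mul, fromRows_mul_fromCols]

theorem transpose_mul_self_fromRows_re_im [Fintype m] (B : Matrix m n ℂ) :
    (fromRows (B.map Complex.re) (B.map Complex.im))ᵀ *
        fromRows (B.map Complex.re) (B.map Complex.im) = (Bᴴ * B).map Complex.re := by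
  ext j k
  simp only [mul_apply, transpose_apply, fromRows_apply_inl, fromRows_apply_inr, map_apply,
    Fintype.sum_sum_type, conjTranspose_apply, Complex.re_sum, RCLike.star_def, Complex.mul_re,
    Complex.conj_re, Complex.conj_im, ← Finset.sum_add_distrib]
  congr 1
  ext i
  ring

theorem map_re_mul_map_ofReal [Fintype m] (B : Matrix p m ℂ) (X : Matrix m n ℝ) :
    (B * X.map Complex.ofReal).map Complex.re = B.map Complex.re * X := by
  ext i j
  simp [mul_apply, Complex.re_sum]

theorem map_im_mul_map_ofReal [Fintype m] (B : Matrix p m ℂ) (X : Matrix m n ℝ) :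
    (B * X.map Complex.ofReal).map Complex.im = B.map Complex.im * X := by
  ext i j
  simp [mul_apply, Complex.im_sum]

theorem transpose_add_conjTranspose (B : Matrix m n ℂ) :
    Bᵀ + Bᴴ = (2 : ℂ) • (B.map Complex.re)ᵀ.map Complex.ofReal := by
  ext i j
  simp [Complex.add_conj]

theorem transpose_sub_conjTranspose (B : Matrix m n ℂ) :
    Bᵀ - Bᴴ = (2 * Complex.I) • (B.map Complex.im)ᵀ.map Complex.ofReal := by
  ext i j
  simp [Complex.sub_conj, mul_right_comm]

theorem ne_zero_of_fromRows_re_im_mul_mul_transpose_ne_zero [Fintype n] (B : Matrix m n ℂ)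
    (P : Matrix n n ℝ) (a b : m ⊕ m)
    (hab : (fromRows (B.map Complex.re) (B.map Complex.im) * P *
      (fromRows (B.map Complex.re) (B.map Complex.im))ᵀ) a b ≠ 0) :
    (B * P.map Complex.ofReal * Bᴴ) (Sum.elim id id a) (Sum.elim id id b) ≠ 0 ∨
      (B * P.map Complex.ofReal * Bᵀ) (Sum.elim id id a) (Sum.elim id id b) ≠ 0 := by
  set BP := B * P.map Complex.ofReal
  have hre (X : Matrix n m ℝ) :
      B.map Complex.re * P * X = (BP * X.map Complex.ofReal).map Complex.re := by
    rw [map_re_mul_map_ofReal, map_re_mul_map_ofReal]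
  have him (X : Matrix n m ℝ) :
      B.map Complex.im * P * X = (BP * X.map Complex.ofReal).map Complex.im := by
    rw [map_im_mul_map_ofReal, map_im_mul_map_ofReal]
  have hsum : (2 : ℂ) • (BP * (B.map Complex.re)ᵀ.map Complex.ofReal) = BP * Bᵀ + BP * Bᴴ := by
    rw [← Matrix.mul_add, transpose_add_conjTranspose, Matrix.mul_smul]
  have hdiff : (2 * Complex.I) • (BP * (B.map Complex.im)ᵀ.map Complex.ofReal) =
      BP * Bᵀ - BP * Bᴴ := by
    rw [← Matrix.mul_sub, transpose_sub_conjTranspose, Matrix.mul_smul]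
  by_contra! ⟨hK, hK'⟩
  replace hsum := congrFun (congrFun hsum (Sum.elim id id a)) (Sum.elim id id b)
  replace hdiff := congrFun (congrFun hdiff (Sum.elim id id a)) (Sum.elim id id b)
  simp only [add_apply, sub_apply, smul_apply, hK, hK', add_zero, sub_zero, smul_eq_mul,
    mul_eq_zero, two_ne_zero, Complex.I_ne_zero, or_false, false_or] at hsum hdiff
  rw [fromRows_mul_mul_transpose_fromRows] at hab
  rcases a with i | i <;> rcases b with j | j <;>
    simp_all only [fromBlocks_apply₁₁, fromBlocks_apply₁₂, fromBlocks_apply₂₁,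
      fromBlocks_apply₂₂, map_apply, Sum.elim_inl, Sum.elim_inr, id_eq, Complex.zero_re,
      Complex.zero_im, ne_eq, not_true_eq_false]

end Matrix

theorem stmt_15_general (M N : ℕ) (s s' : ℕ) (A : Matrix (Fin N) (Fin N) ℝ)
    (B : Matrix (Fin M) (Fin N) ℂ)
    (hreal : ∀ i j, (Bᴴ * B) i j = Complex.ofReal (((Bᴴ * B).map Complex.re) i j))
    (hs : IsSparse s (B * A.map Complex.ofReal * ((Bᴴ * B)⁻¹ * Bᴴ)))
    (hs' : IsSparse s' (B * A.map Complex.ofReal * (((Bᴴ * B)⁻¹ * Bᴴ).map (starRingEnd ℂ)))) :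
    IsSparse (2 * (s + s'))
      ((Matrix.fromRows (B.map Complex.re) (B.map Complex.im)) * A *
        ((((Matrix.fromRows (B.map Complex.re) (B.map Complex.im))ᵀ *
            (Matrix.fromRows (B.map Complex.re) (B.map Complex.im)))⁻¹) *
          (Matrix.fromRows (B.map Complex.re) (B.map Complex.im))ᵀ)) := by
  set G := (Bᴴ * B).map Complex.re
  have hinv : (Bᴴ * B)⁻¹ = G⁻¹.map Complex.ofReal := by
    rw [show Bᴴ * B = G.map Complex.ofReal from Matrix.ext hreal]
    exact (map_nonsing_inv Complex.ofRealHom G).symm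
  have hconj : ((Bᴴ * B)⁻¹ * Bᴴ).map (starRingEnd ℂ) = G⁻¹.map Complex.ofReal * Bᵀ := by
    rw [Matrix.map_mul, hinv]
    congr 1 <;> ext <;> simp
  have hmul : (A * G⁻¹).map Complex.ofReal = A.map Complex.ofReal * G⁻¹.map Complex.ofReal :=
    Matrix.map_mul (f := Complex.ofRealHom)
  have hK : B * A.map Complex.ofReal * ((Bᴴ * B)⁻¹ * Bᴴ) =
      B * (A * G⁻¹).map Complex.ofReal * Bᴴ := by
    rw [hinv, hmul]
    simp only [Matrix.mul_assoc]
  have hK' : B * A.map Complex.ofReal * (((Bᴴ * B)⁻¹ * Bᴴ).map (starRingEnd ℂ)) =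
      B * (A * G⁻¹).map Complex.ofReal * Bᵀ := by
    rw [hconj, hmul]
    simp only [Matrix.mul_assoc]
  have hB' := transpose_mul_self_fromRows_re_im B
  rw [hK] at hs
  rw [hK'] at hs'
  rw [hB', ← Matrix.mul_assoc, Matrix.mul_assoc _ A]
  exact hs.of_ne_zero_imp hs' (ne_zero_of_fromRows_re_im_mul_mul_transpose_ne_zero B _)

theorem stmt_15 (M N : ℕ) (s s' : ℕ) (A : Matrix (Fin N) (Fin N) ℝ)
    (B : Matrix (Fin M) (Fin N) ℂ) (hrank : B.rank = N)
    (hanti : (B * A.map Complex.ofReal * ((Bᴴ * B)⁻¹ * Bᴴ))ᴴ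
        = -(B * A.map Complex.ofReal * ((Bᴴ * B)⁻¹ * Bᴴ)))
    (hreal : ∀ i j, (Bᴴ * B) i j = Complex.ofReal (((Bᴴ * B).map Complex.re) i j))
    (hs : IsSparse s (B * A.map Complex.ofReal * ((Bᴴ * B)⁻¹ * Bᴴ)))
    (hs' : IsSparse s' (B * A.map Complex.ofReal * (((Bᴴ * B)⁻¹ * Bᴴ).map (starRingEnd ℂ)))) :
    IsSparse (2 * (s + s'))
      ((Matrix.fromRows (B.map Complex.re) (B.map Complex.im)) * A *
        ((((Matrix.fromRows (B.map Complex.re) (B.map Complex.im))ᵀ *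
            (Matrix.fromRows (B.map Complex.re) (B.map Complex.im)))⁻¹) *
          (Matrix.fromRows (B.map Complex.re) (B.map Complex.im))ᵀ)) :=
  stmt_15_general M N s s' A B hreal hs hs'
end
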